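/- For any non-negative integer t and any graph G, every t-perturbation of G is locally equivalent to a rank-2t perturbation of G. -/

import Mathlib

namespace EP

variable {V W : Type}

/-- Local complementation of `G` at `v`: complement the adjacency between
every pair of distinct neighbours of `v`. -/
def localComp (G : SimpleGraph V) (v : V) : SimpleGraph V where
  Adj x y := x ≠ y ∧
    ((G.Adj v x ∧ G.Adj v y ∧ ¬ G.Adj x y) ∨ (¬(G.Adj v x ∧ G.Adj v y) ∧ G.Adj x y))
  symm := ⟨by
    intro x y h
    obtain ⟨hxy, h⟩ := h
    refine ⟨hxy.symm, ?_⟩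
    rcases h with ⟨h1, h2, h3⟩ | ⟨h1, h2⟩
    · exact Or.inl ⟨h2, h1, fun h => h3 h.symm⟩
    · exact Or.inr ⟨fun h => h1 ⟨h.2, h.1⟩, h2.symm⟩⟩
  loopless := ⟨fun x h => h.1 rfl⟩

/-- Two graphs on the same vertex set are locally equivalent if one is obtained from
the other by a sequence of local complementations. -/
def LocEquiv (G G' : SimpleGraph V) : Prop :=
  Relation.ReflTransGen (fun A B => ∃ v, B = localComp A v) G G'

/-- `H` is a vertex-minor of `G`, located at the embedding `f`: some graph locally
equivalent to `G` induces a copy of `H` on the image of `f` (equivalently, `H` is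
obtained from `G` by a sequence of local complementations and vertex deletions,
with `f` recording the surviving vertices). -/
def IsVertexMinorAt (G : SimpleGraph V) (H : SimpleGraph W) (f : W ↪ V) : Prop :=
  ∃ G' : SimpleGraph V, LocEquiv G G' ∧ ∀ x y, H.Adj x y ↔ G'.Adj (f x) (f y)

/-- `G` has a vertex-minor isomorphic to `H`. -/
def HasVertexMinor (G : SimpleGraph V) (H : SimpleGraph W) : Prop :=
  ∃ f : W ↪ V, IsVertexMinorAt G H f

/-- `G₁` is a `t`-perturbation of `G₂`: they have the same vertex set `V`, and some
graph on `|V| + t` vertices contains both of them as vertex-minors (on `V`). -/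
def IsPerturbation (t : ℕ) (G₁ G₂ : SimpleGraph V) : Prop :=
  ∃ Gbig : SimpleGraph (V ⊕ Fin t),
    IsVertexMinorAt Gbig G₁ ⟨Sum.inl, Sum.inl_injective⟩ ∧
    IsVertexMinorAt Gbig G₂ ⟨Sum.inl, Sum.inl_injective⟩

/-- The disjoint union of `k` copies of `H`. -/
def copies (k : ℕ) (H : SimpleGraph W) : SimpleGraph (Fin k × W) where
  Adj x y := x.1 = y.1 ∧ H.Adj x.2 y.2
  symm := ⟨fun _ _ h => ⟨h.1.symm, h.2.symm⟩⟩
  loopless := ⟨fun x h => H.loopless.1 x.2 h.2⟩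

/-- `G` is a circle graph: its vertices can be assigned chords of a circle
(encoded by pairs of distinct endpoints, all `2|V|` endpoints being distinct) so that
two distinct vertices are adjacent iff their chords cross, i.e. exactly one endpoint
of one chord lies strictly between the two endpoints of the other. -/
def IsCircleGraph (G : SimpleGraph V) : Prop :=
  ∃ a b : V → ℝ,
    (∀ u v, a u = a v → u = v) ∧ (∀ u v, b u = b v → u = v) ∧ (∀ u v, a u ≠ b v) ∧
    ∀ u v, G.Adj u v ↔ u ≠ v ∧
      ¬((min (a u) (b u) < a v ∧ a v < max (a u) (b u)) ↔
        (min (a u) (b u) < b v ∧ b v < max (a u) (b u)))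

/-- `G` is `t`-robust for `H` if every `t`-perturbation of `G` has a vertex-minor
isomorphic to `H`. -/
def Robust (t : ℕ) (G : SimpleGraph V) (H : SimpleGraph W) : Prop :=
  ∀ G' : SimpleGraph V, IsPerturbation t G' G → HasVertexMinor G' H

open Classical in
/-- The cut-rank of `X` in `G`: the rank over `GF(2)` of the `X × Xᶜ` submatrix of the
adjacency matrix of `G`. -/
noncomputable def cutRank [Fintype V] (G : SimpleGraph V) (X : Set V) : ℕ :=
  (Matrix.of fun (x : X) (y : ↥Xᶜ) => if G.Adj x.1 y.1 then (1 : ZMod 2) else 0).rank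

/-- The graph obtained from `G` by deleting all edges with exactly one end in `X`. -/
def cutDelete (G : SimpleGraph V) (X : Set V) : SimpleGraph V where
  Adj x y := G.Adj x y ∧ (x ∈ X ↔ y ∈ X)
  symm := ⟨fun _ _ h => ⟨h.1.symm, h.2.symm⟩⟩
  loopless := ⟨fun x h => G.loopless.1 x h.1⟩

open Classical in
/-- The adjacency matrix of `G` over `GF(2)`. -/
noncomputable def adjMat (G : SimpleGraph V) : Matrix V V (ZMod 2) :=
  Matrix.of fun x y => if G.Adj x y then 1 else 0

/-- `G₁` is a rank-`t` perturbation of `G₂`: the adjacency matrix of `G₁` is obtained from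
that of `G₂` by adding a matrix of rank at most `t` over `GF(2)` and then zeroing out the
diagonal. -/
def IsRankPerturbation [Fintype V] (t : ℕ) (G₁ G₂ : SimpleGraph V) : Prop :=
  ∃ M : Matrix V V (ZMod 2), M.rank ≤ t ∧
    ∀ x y : V, x ≠ y → adjMat G₁ x y = adjMat G₂ x y + M x y

/-!
Let `Gbig` on `V ⊕ Fin t` have `G'` and `G` as vertex-minors on `V`, say `G' = K₁[V]` and
`G = K₂[V]` with `K₁` and `K₂` locally equivalent. Delete the `t` extra vertices one at a time.
By Bouchet's lemma, if `H` is locally equivalent to `A` and `u` is a vertex, then `H - u` is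
locally equivalent to `A - u`, to `A * u - u`, or to the pivot `A ∧ uy - u` for a neighbour `y`
of `u`. Over `GF(2)`, a local complementation at `v` adds `a aᵀ` off the diagonal, `a` being the
row of `v`; so after restricting to `V`, the second option differs from `A` by rank at most `1`
and the third, whose three rank-one updates partly cancel, by rank at most `2`. Each deleted
vertex thus costs rank `2`, and the local equivalences accumulate on the side of `G'`.
-/

lemma localComp_adj {G : SimpleGraph V} {v x y : V} :
    (localComp G v).Adj x y ↔ x ≠ y ∧ (G.Adj x y ↔ ¬(G.Adj v x ∧ G.Adj v y)) := by
  simp only [localComp]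
  tauto

lemma localComp_adj_of_not_adj {G : SimpleGraph V} {v x y : V} (h : ¬G.Adj v x) :
    (localComp G v).Adj x y ↔ G.Adj x y := by
  rw [localComp_adj]
  have := G.ne_of_adj (a := x) (b := y)
  tauto

@[simp]
lemma localComp_localComp_self (G : SimpleGraph V) (v : V) : localComp (localComp G v) v = G := by
  ext x y
  simp only [localComp_adj]
  grind [SimpleGraph.adj_comm, SimpleGraph.irrefl]

lemma localComp_comm {G : SimpleGraph V} {u v : V} (h : ¬G.Adj u v) :
    localComp (localComp G u) v = localComp (localComp G v) u := by
  ext x y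
  simp only [localComp_adj]
  grind [SimpleGraph.adj_comm, SimpleGraph.irrefl]

/-- The pivot `G ∧ uv` of the paper, for an edge `uv`. -/
def pivot (G : SimpleGraph V) (u v : V) : SimpleGraph V :=
  localComp (localComp (localComp G u) v) u

lemma pivot_comm {G : SimpleGraph V} {u v : V} (h : G.Adj u v) : pivot G u v = pivot G v u := by
  ext x y
  simp only [pivot, localComp_adj]
  grind (splits := 200) [SimpleGraph.adj_comm, SimpleGraph.irrefl]

lemma eq_or_eq_or_eq_or_ne (a u v y : V) : u = a ∨ v = a ∨ y = a ∨ (a ≠ u ∧ a ≠ v ∧ a ≠ y) := by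
  tauto

lemma localComp_triple_eq_of_not_adj_of_adj {G : SimpleGraph V} {u v y : V} (hne : u ≠ v)
    (huv : ¬G.Adj u v) (hvy : G.Adj v y) (huy : G.Adj u y) :
    localComp (localComp (localComp G v) y) u =
      localComp (localComp (localComp (localComp G y) u) v) y := by
  ext a b
  rcases eq_or_eq_or_eq_or_ne a u v y with rfl | rfl | rfl | ⟨hau, hav, hay⟩ <;>
  rcases eq_or_eq_or_eq_or_ne b u v y with rfl | rfl | rfl | ⟨hbu, hbv, hby⟩ <;>
  simp only [localComp_adj] <;> grind [SimpleGraph.adj_comm, SimpleGraph.irrefl]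

lemma localComp_triple_eq_pivot_of_adj {G : SimpleGraph V} {u v y : V} (hvy : v ≠ y)
    (huv : G.Adj u v) (huy : (localComp G v).Adj u y) :
    localComp (localComp (localComp G v) y) u = pivot (localComp G u) v y := by
  have hne : u ≠ v := G.ne_of_adj huv
  ext a b
  rcases eq_or_eq_or_eq_or_ne a u v y with rfl | rfl | rfl | ⟨hau, hav, hay⟩ <;>
  rcases eq_or_eq_or_eq_or_ne b u v y with rfl | rfl | rfl | ⟨hbu, hbv, hby⟩ <;>
  simp only [pivot, localComp_adj] at huy ⊢ <;> grind [SimpleGraph.adj_comm, SimpleGraph.irrefl]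

lemma localComp_triple_eq_of_not_adj_of_not_adj {G : SimpleGraph V} {u v y : V}
    (huv : ¬G.Adj u v) (hvy : ¬G.Adj v y) :
    localComp (localComp (localComp G v) y) u = localComp (localComp (localComp G y) u) v := by
  rw [localComp_comm hvy, localComp_comm]
  rwa [localComp_adj_of_not_adj (fun h => hvy h.symm), G.adj_comm]

lemma locEquiv_localComp (G : SimpleGraph V) (v : V) : LocEquiv G (localComp G v) :=
  Relation.ReflTransGen.single ⟨v, rfl⟩

namespace LocEquiv

lemma refl (G : SimpleGraph V) : LocEquiv G G := Relation.ReflTransGen.refl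

lemma trans {G H K : SimpleGraph V} (h₁ : LocEquiv G H) (h₂ : LocEquiv H K) : LocEquiv G K :=
  Relation.ReflTransGen.trans h₁ h₂

lemma symm {G H : SimpleGraph V} (h : LocEquiv G H) : LocEquiv H G := by
  induction h with
  | refl => exact refl G
  | @tail B _ _ hstep ih =>
    obtain ⟨v, rfl⟩ := hstep
    have h := locEquiv_localComp (localComp B v) v
    rw [localComp_localComp_self] at h
    exact h.trans ih

end LocEquiv

lemma comap_localComp {f : W → V} (hf : Function.Injective f) (G : SimpleGraph V) (w : W) :
    (localComp G (f w)).comap f = localComp (G.comap f) w := by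
  ext a b
  simp only [SimpleGraph.comap_adj, localComp_adj, hf.ne_iff]

lemma locEquiv_comap_localComp {f : W → V} (hf : Function.Injective f) (G : SimpleGraph V)
    (w : W) : LocEquiv ((localComp G (f w)).comap f) (G.comap f) := by
  rw [comap_localComp hf]
  exact (locEquiv_localComp _ w).symm

section Bouchet

variable {U : Type} {j : W → U} {u : U}

/-- Bouchet's trichotomy for deleting `u`, where `j` embeds the remaining vertices. The third
alternative `A * y * u - u` stands for the pivot `A ∧ uy - u` (`locEquiv_comap_pivot`). -/
def BouchetAlternative (j : W → U) (u : U) (H A : SimpleGraph U) : Prop :=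
  LocEquiv (H.comap j) (A.comap j) ∨ LocEquiv (H.comap j) ((localComp A u).comap j) ∨
    ∃ y, A.Adj u y ∧ LocEquiv (H.comap j) ((localComp (localComp A y) u).comap j)

lemma locEquiv_comap_pivot (hj : Function.Injective j) {A : SimpleGraph U} {w : W}
    (h : A.Adj u (j w)) :
    LocEquiv ((pivot A u (j w)).comap j) ((localComp (localComp A (j w)) u).comap j) := by
  rw [pivot_comm h]
  exact locEquiv_comap_localComp hj _ w

lemma BouchetAlternative.of_localComp_self (hj : Function.Injective j)
    (hrange : Set.range j = {u}ᶜ) {H A : SimpleGraph U}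
    (h : BouchetAlternative j u H (localComp A u)) : BouchetAlternative j u H A := by
  rcases h with h | h | ⟨y, hy, h⟩
  · exact Or.inr (Or.inl h)
  · rw [localComp_localComp_self] at h
    exact Or.inl h
  · rw [localComp_adj_of_not_adj A.irrefl] at hy
    obtain ⟨w, rfl⟩ : y ∈ Set.range j := hrange ▸ (A.ne_of_adj hy).symm
    exact Or.inr (Or.inr ⟨j w, hy, h.trans (locEquiv_comap_pivot hj hy)⟩)

lemma BouchetAlternative.of_localComp (hj : Function.Injective j)
    (hrange : Set.range j = {u}ᶜ) {H A : SimpleGraph U} {v : W}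
    (h : BouchetAlternative j u H (localComp A (j v))) : BouchetAlternative j u H A := by
  have hvu : j v ≠ u := by
    have : j v ∈ Set.range j := ⟨v, rfl⟩
    rwa [hrange] at this
  rcases h with h | h | ⟨y, hy, h⟩
  · exact Or.inl (h.trans (locEquiv_comap_localComp hj A v))
  · by_cases huv : A.Adj u (j v)
    · exact Or.inr (Or.inr ⟨j v, huv, h⟩)
    · rw [localComp_comm fun h => huv h.symm] at h
      exact Or.inr (Or.inl (h.trans (locEquiv_comap_localComp hj _ v)))
  · obtain ⟨w, rfl⟩ : y ∈ Set.range j := hrange ▸ ((localComp A (j v)).ne_of_adj hy).symm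
    by_cases hvw : v = w
    · subst hvw
      rw [localComp_localComp_self] at h
      exact Or.inr (Or.inl h)
    by_cases huv : A.Adj u (j v)
    · rw [localComp_triple_eq_pivot_of_adj (hj.ne hvw) huv hy] at h
      refine Or.inr (Or.inl (h.trans ?_))
      exact (locEquiv_comap_localComp hj _ v).trans <| (locEquiv_comap_localComp hj _ w).trans <|
        locEquiv_comap_localComp hj _ v
    have huw : A.Adj u (j w) := (localComp_adj_of_not_adj fun h => huv h.symm).1 hy
    refine Or.inr (Or.inr ⟨j w, huw, h.trans ?_⟩)
    by_cases hvw_adj : A.Adj (j v) (j w)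
    · rw [localComp_triple_eq_of_not_adj_of_adj hvu.symm huv hvw_adj huw]
      exact (locEquiv_comap_localComp hj _ w).trans (locEquiv_comap_localComp hj _ v)
    · rw [localComp_triple_eq_of_not_adj_of_not_adj huv hvw_adj]
      exact locEquiv_comap_localComp hj _ v

theorem LocEquiv.bouchetAlternative (hj : Function.Injective j) (hrange : Set.range j = {u}ᶜ)
    {A H : SimpleGraph U} (h : LocEquiv A H) : BouchetAlternative j u H A := by
  induction h using Relation.ReflTransGen.head_induction_on with
  | refl => exact Or.inl (LocEquiv.refl _)
  | head hstep _ ih =>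
    obtain ⟨v, rfl⟩ := hstep
    by_cases hv : v = u
    · subst hv
      exact ih.of_localComp_self hj hrange
    · obtain ⟨w, rfl⟩ : v ∈ Set.range j := hrange ▸ hv
      exact ih.of_localComp hj hrange

end Bouchet

section RankPerturbation

lemma adjMat_apply_self (G : SimpleGraph V) (x : V) : adjMat G x x = 0 := by
  simp [adjMat]

lemma adjMat_comm (G : SimpleGraph V) (x y : V) : adjMat G x y = adjMat G y x := by
  simp only [adjMat, Matrix.of_apply]
  congr 1
  exact propext (G.adj_comm x y)

lemma adjMat_comap {f : W → V} (G : SimpleGraph V) (x y : W) :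
    adjMat (G.comap f) x y = adjMat G (f x) (f y) := rfl

/-- No case distinction on `x = v` or `y = v` is needed, because `adjMat G v v = 0`. -/
lemma adjMat_localComp {G : SimpleGraph V} {v x y : V} (h : x ≠ y) :
    adjMat (localComp G v) x y = adjMat G x y + adjMat G v x * adjMat G v y := by
  simp only [adjMat, Matrix.of_apply]
  split_ifs <;> simp_all [localComp_adj, CharTwo.add_self_eq_zero]

lemma Matrix.rank_add_le {K m n : Type} [Field K] [Fintype n] (A B : Matrix m n K) :
    (A + B).rank ≤ A.rank + B.rank := by
  rw [Matrix.rank, Matrix.rank, Matrix.rank, Matrix.mulVecLin_add]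
  exact (Submodule.finrank_mono (LinearMap.range_add_le _ _)).trans
    (Submodule.finrank_add_le_finrank_add_finrank _ _)

variable [Fintype W]

namespace IsRankPerturbation

lemma refl (t : ℕ) (G : SimpleGraph W) : IsRankPerturbation t G G :=
  ⟨0, by simp, fun _ _ _ => by simp⟩

lemma mono {s t : ℕ} {G₁ G₂ : SimpleGraph W} (h : IsRankPerturbation s G₁ G₂) (hst : s ≤ t) :
    IsRankPerturbation t G₁ G₂ :=
  let ⟨M, hM, hG⟩ := h
  ⟨M, hM.trans hst, hG⟩

lemma trans {s t : ℕ} {G₁ G₂ G₃ : SimpleGraph W} (h₁ : IsRankPerturbation s G₁ G₂)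
    (h₂ : IsRankPerturbation t G₂ G₃) : IsRankPerturbation (s + t) G₁ G₃ := by
  obtain ⟨M₁, hM₁, hG₁⟩ := h₁
  obtain ⟨M₂, hM₂, hG₂⟩ := h₂
  refine ⟨M₁ + M₂, (Matrix.rank_add_le _ _).trans (add_le_add hM₁ hM₂), fun x y h => ?_⟩
  rw [hG₁ x y h, hG₂ x y h, Matrix.add_apply, add_assoc, add_comm (M₂ x y)]

end IsRankPerturbation

lemma isRankPerturbation_comap_localComp {f : W → V} (hf : Function.Injective f)
    (G : SimpleGraph V) (v : V) :
    IsRankPerturbation 1 ((localComp G v).comap f) (G.comap f) := by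
  let a x := adjMat G v (f x)
  exact ⟨Matrix.vecMulVec a a, Matrix.rank_vecMulVec_le a a,
    fun x y h => adjMat_localComp (hf.ne h)⟩

/-- With `u` deleted, the three rank-one updates `a aᵀ`, `b bᵀ`, `c cᵀ` of the pivot satisfy
`c = a + b`, so over `GF(2)` they add up to `a cᵀ + c aᵀ`. -/
lemma isRankPerturbation_comap_pivot {f : W → V} (hf : Function.Injective f) {G : SimpleGraph V}
    {u y : V} (hu : ∀ x, f x ≠ u) (huy : G.Adj u y) :
    IsRankPerturbation 2 ((pivot G u y).comap f) (G.comap f) := by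
  set a := fun x => adjMat G u (f x)
  set b := fun x => adjMat (localComp G u) y (f x)
  set c := fun x => adjMat (localComp (localComp G u) y) u (f x)
  have hc : ∀ x, c x = a x + b x := fun x => by
    have hyu : adjMat (localComp G u) y u = 1 := by
      rw [adjMat_localComp (G.ne_of_adj huy).symm, adjMat_apply_self, adjMat_comm]
      simp [adjMat, huy]
    simp only [c, a, b]
    rw [adjMat_localComp (hu x).symm, adjMat_localComp (hu x).symm, adjMat_apply_self, hyu]
    ring
  refine ⟨Matrix.vecMulVec a c + Matrix.vecMulVec c a,
    (Matrix.rank_add_le _ _).trans (add_le_add (Matrix.rank_vecMulVec_le a c)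
      (Matrix.rank_vecMulVec_le c a)), fun x z h => ?_⟩
  have hfxz := hf.ne h
  rw [adjMat_comap, adjMat_comap, pivot, adjMat_localComp hfxz, adjMat_localComp hfxz,
    adjMat_localComp hfxz]
  simp only [Matrix.add_apply, Matrix.vecMulVec_apply]
  change _ + a x * a z + b x * b z + c x * c z = _ + (a x * c z + c x * a z)
  rw [hc x, hc z]
  linear_combination (b x * b z) * (by decide : (2 : ZMod 2) = 0)

end RankPerturbation

lemma LocEquiv.comap {f : W → V} (hf : Function.Bijective f) {G H : SimpleGraph V}
    (h : LocEquiv G H) : LocEquiv (G.comap f) (H.comap f) := by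
  induction h with
  | refl => exact LocEquiv.refl _
  | tail _ hstep ih =>
    obtain ⟨v, rfl⟩ := hstep
    obtain ⟨w, rfl⟩ := hf.2 v
    rw [comap_localComp hf.1]
    exact ih.trans (locEquiv_localComp _ w)

theorem LocEquiv.exists_isRankPerturbation_comap_inl [Fintype V] {n : ℕ}
    {H₁ H₂ : SimpleGraph (V ⊕ Fin n)} (h : LocEquiv H₁ H₂) :
    ∃ K, LocEquiv (H₁.comap Sum.inl) K ∧ IsRankPerturbation (2 * n) K (H₂.comap Sum.inl) := by
  induction n with
  | zero =>
    have hinl : Function.Bijective (Sum.inl : V → V ⊕ Fin 0) :=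
      ⟨Sum.inl_injective, fun | .inl v => ⟨v, rfl⟩ | .inr i => i.elim0⟩
    exact ⟨_, h.comap hinl, .refl _ _⟩
  | succ n ih =>
    let j : V ⊕ Fin n → V ⊕ Fin (n + 1) := Sum.map id Fin.castSucc
    let u : V ⊕ Fin (n + 1) := .inr (Fin.last n)
    have hj : Function.Injective j := Function.injective_id.sumMap (Fin.castSucc_injective n)
    have hrange : Set.range j = {u}ᶜ := by
      ext (v | i) <;> simp [j, u, Fin.exists_castSucc_eq]
    suffices ∃ B : SimpleGraph (V ⊕ Fin (n + 1)), LocEquiv (H₁.comap j) (B.comap j) ∧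
        IsRankPerturbation 2 (B.comap Sum.inl) (H₂.comap Sum.inl) by
      obtain ⟨B, hB, hBH₂⟩ := this
      obtain ⟨K, hK, hKB⟩ := ih hB
      exact ⟨K, hK, (hKB.trans hBH₂).mono (by omega)⟩
    obtain h₀ | h₁ | ⟨y, hy, h₂⟩ := h.symm.bouchetAlternative hj hrange
    · exact ⟨H₂, h₀, .refl _ _⟩
    · exact ⟨localComp H₂ u, h₁,
        (isRankPerturbation_comap_localComp Sum.inl_injective H₂ u).mono (by omega)⟩
    · obtain ⟨w, rfl⟩ : y ∈ Set.range j := hrange ▸ (H₂.ne_of_adj hy).symm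
      exact ⟨pivot H₂ u (j w), h₂.trans (locEquiv_comap_pivot hj hy).symm,
        isRankPerturbation_comap_pivot Sum.inl_injective (fun _ => Sum.inl_ne_inr) hy⟩

/-- Every `t`-perturbation of a graph `G` is locally equivalent to a
rank-`2t` perturbation of `G`. -/
theorem perturbation_locEquiv_rankPerturbation {V : Type} [Fintype V] (t : ℕ)
    (G G' : SimpleGraph V) (h : IsPerturbation t G' G) :
    ∃ G'' : SimpleGraph V, LocEquiv G' G'' ∧ IsRankPerturbation (2 * t) G'' G := by
  obtain ⟨Gbig, ⟨K₁, hK₁, hG'⟩, ⟨K₂, hK₂, hG⟩⟩ := h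
  obtain rfl : G' = K₁.comap Sum.inl := by ext; exact hG' _ _
  obtain rfl : G = K₂.comap Sum.inl := by ext; exact hG _ _
  exact (hK₁.symm.trans hK₂).exists_isRankPerturbation_comap_inl

end EP
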